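/- arXiv:2207.06305 — 2 statements merged into one kernel-verified Lean document; each statement's English description precedes it below -/
import Mathlib

section
/- Consider minimizing Σ_{i=1}^p (1/π_i - 1) d_i² over probabilities π_i subject to Σ_{i=1}^p π_i = b and 0 ≤ π_i ≤ 1. Order |d_(1)| ≤ ⋯ ≤ |d_(p)| and let c be the largest integer satisfying 0 < b + c - p ≤ Σ_{i=1}^c |d_(i)|/|d_(c)|. Then the minimizer is given by π_(i) = (b + c - p)·|d_(i)|/Σ_{j=1}^c |d_(j)| for i ≤ c and π_(i) = 1 for i > c. -/
/-!
With `S = ∑_{i < c} |d i|`, the multiplier `λ = (S / (b + c - p))²` satisfies the KKT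
conditions of the convex objective `f π = ∑ (1 / π i - 1) d i²` at `π`: on the first `c`
coordinates `d i² / π i² = λ`, and on the remaining ones `π i = 1` and `d i² ≥ λ`, the
latter being exactly the maximality of `c`. The tangent-line bound
`1/x - 1/y ≤ (y - x)/x²` then gives `f π - f q ≤ λ ∑ (q i - π i) = 0`.
-/

open Finset

lemma one_div_sub_one_div_le_div_sq {x y : ℝ} (hx : 0 < x) (hy : 0 < y) :
    1 / x - 1 / y ≤ (y - x) / x ^ 2 := by
  have h : (y - x) / x ^ 2 - (1 / x - 1 / y) = (y - x) ^ 2 / (x ^ 2 * y) := by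
    field_simp
  have : 0 ≤ (y - x) ^ 2 / (x ^ 2 * y) := by positivity
  linarith

lemma one_div_sub_one_div_mul_le {x y w lam : ℝ} (hx : 0 < x) (hy : 0 < y) (hy1 : y ≤ 1)
    (hlam : 0 ≤ lam) (hkkt : w = lam * x ^ 2 ∨ x = 1 ∧ lam ≤ w) :
    (1 / x - 1 / y) * w ≤ lam * (y - x) := by
  have hw : 0 ≤ w := by
    rcases hkkt with rfl | ⟨-, hw⟩
    · positivity
    · linarith
  calc (1 / x - 1 / y) * w ≤ (y - x) / x ^ 2 * w :=
        mul_le_mul_of_nonneg_right (one_div_sub_one_div_le_div_sq hx hy) hw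
    _ ≤ lam * (y - x) := by
      rcases hkkt with rfl | ⟨rfl, hw⟩
      · exact le_of_eq (by field_simp)
      · simpa [mul_comm] using mul_le_mul_of_nonpos_left hw (sub_nonpos.2 hy1)

theorem sum_one_div_sub_one_mul_le_of_kkt {ι : Type*} [Fintype ι] {w x y : ι → ℝ} {lam : ℝ}
    (hx : ∀ i, 0 < x i) (hy : ∀ i, 0 < y i ∧ y i ≤ 1) (hsum : ∑ i, x i = ∑ i, y i)
    (hlam : 0 ≤ lam) (hkkt : ∀ i, w i = lam * x i ^ 2 ∨ x i = 1 ∧ lam ≤ w i) :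
    ∑ i, (1 / x i - 1) * w i ≤ ∑ i, (1 / y i - 1) * w i := by
  have key : ∑ i, (1 / x i - 1 / y i) * w i ≤ ∑ i, lam * (y i - x i) :=
    sum_le_sum fun i _ => one_div_sub_one_div_mul_le (hx i) (hy i).1 (hy i).2 hlam (hkkt i)
  rw [← mul_sum, sum_sub_distrib, ← hsum, sub_self, mul_zero] at key
  have : ∑ i, (1 / x i - 1) * w i - ∑ i, (1 / y i - 1) * w i
      = ∑ i, (1 / x i - 1 / y i) * w i := by
    rw [← sum_sub_distrib]
    exact sum_congr rfl fun i _ => by ring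
  linarith

namespace Fin

lemma sum_filter_val_lt_succ {M : Type*} [AddCommMonoid M] {p c : ℕ} (hc : c < p)
    (f : Fin p → M) :
    ∑ i ∈ univ.filter (fun i : Fin p => (i : ℕ) < c + 1), f i
      = ∑ i ∈ univ.filter (fun i : Fin p => (i : ℕ) < c), f i + f ⟨c, hc⟩ := by
  have : univ.filter (fun i : Fin p => (i : ℕ) < c + 1)
      = insert ⟨c, hc⟩ (univ.filter fun i : Fin p => (i : ℕ) < c) := by
    ext i
    simp only [mem_filter, mem_univ, true_and, mem_insert, Fin.ext_iff]
    omega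
  rw [this, sum_insert (by simp), add_comm]

lemma card_filter_not_val_lt {p c : ℕ} (hc : c ≤ p) :
    (univ.filter fun i : Fin p => ¬(i : ℕ) < c).card = p - c := by
  rw [filter_not, card_sdiff_of_subset (filter_subset _ _), card_univ, Fintype.card_fin,
    card_filter_val_lt, min_eq_right hc]

end Fin

section WaterFilling

variable {p c : ℕ} {d : Fin p → ℝ}

lemma mul_abs_le_sum_of_le_sum_div {k : Fin p} (hk : d k ≠ 0)
    (hsorted : Monotone fun i : Fin p => |d i|) {β : ℝ} (hβ : 0 ≤ β)
    (hchi : β ≤ ∑ i ∈ univ.filter (fun i : Fin p => (i : ℕ) < c), |d i| / |d k|)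
    {i : Fin p} (hik : i ≤ k) :
    β * |d i| ≤ ∑ i ∈ univ.filter (fun i : Fin p => (i : ℕ) < c), |d i| := by
  rw [← sum_div, le_div_iff₀ (abs_pos.mpr hk)] at hchi
  exact (mul_le_mul_of_nonneg_left (hsorted hik) hβ).trans hchi

lemma sq_sum_div_le_sq_of_not_le (hd : ∀ i, d i ≠ 0)
    (hsorted : Monotone fun i : Fin p => |d i|) {β : ℝ} (hβ : 0 < β) (hc : c < p)
    (hnext : ¬(0 < β + 1 ∧ β + 1 ≤
      ∑ i ∈ univ.filter (fun i : Fin p => (i : ℕ) < c + 1), |d i| / |d ⟨c, hc⟩|))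
    {i : Fin p} (hi : c ≤ i) :
    ((∑ j ∈ univ.filter (fun j : Fin p => (j : ℕ) < c), |d j|) / β) ^ 2 ≤ d i ^ 2 := by
  set S := ∑ j ∈ univ.filter (fun j : Fin p => (j : ℕ) < c), |d j|
  have hdc : 0 < |d ⟨c, hc⟩| := abs_pos.mpr (hd _)
  have hlt : S / |d ⟨c, hc⟩| + 1 < β + 1 := by
    rw [not_and_or, not_lt, not_le] at hnext
    rcases hnext with h | h
    · linarith
    · rwa [Fin.sum_filter_val_lt_succ hc, ← sum_div, div_self hdc.ne'] at h
  have hS : S / β < |d ⟨c, hc⟩| := by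
    rw [add_lt_add_iff_right, div_lt_iff₀ hdc] at hlt
    rwa [div_lt_iff₀ hβ, mul_comm]
  rw [← sq_abs (d i)]
  have hS0 : 0 ≤ S / β := div_nonneg (sum_nonneg fun j _ => abs_nonneg _) hβ.le
  exact pow_le_pow_left₀ hS0 (hS.le.trans (hsorted hi)) 2

lemma sum_ite_val_lt_one (hc : c ≤ p) (f : Fin p → ℝ) :
    ∑ i : Fin p, (if (i : ℕ) < c then f i else 1)
      = ∑ i ∈ univ.filter (fun i : Fin p => (i : ℕ) < c), f i + (p - c : ℝ) := by
  rw [sum_ite, sum_const, Fin.card_filter_not_val_lt hc, nsmul_one, Nat.cast_sub hc]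

end WaterFilling

theorem stmt6 (p b : ℕ) (d : Fin p → ℝ)
    (hd : ∀ i, d i ≠ 0) (hsorted : Monotone fun i : Fin p => |d i|)
    (c : ℕ) (hc0 : 0 < c) (hcp : c ≤ p)
    (hclo : 0 < (b : ℝ) + c - p)
    (hchi : (b : ℝ) + c - p ≤
      ∑ i ∈ Finset.univ.filter (fun i : Fin p => (i : ℕ) < c),
        |d i| / |d ⟨c - 1, by omega⟩|)
    (hmax : ∀ c' : ℕ, ∀ (hlt : c < c') (hle : c' ≤ p),
      ¬(0 < (b : ℝ) + c' - p ∧ (b : ℝ) + c' - p ≤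
        ∑ i ∈ Finset.univ.filter (fun i : Fin p => (i : ℕ) < c'),
          |d i| / |d ⟨c' - 1, by omega⟩|))
    (π : Fin p → ℝ)
    (hπ : ∀ i : Fin p, π i =
      if (i : ℕ) < c then
        ((b : ℝ) + c - p) * |d i| /
          (∑ j ∈ Finset.univ.filter (fun j : Fin p => (j : ℕ) < c), |d j|)
      else 1) :
    ((∀ i, 0 < π i ∧ π i ≤ 1) ∧ ∑ i : Fin p, π i = (b : ℝ)) ∧
    ∀ q : Fin p → ℝ, (∀ i, 0 < q i ∧ q i ≤ 1) → (∑ i : Fin p, q i = (b : ℝ)) →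
      ∑ i : Fin p, (1 / π i - 1) * d i ^ 2 ≤ ∑ i : Fin p, (1 / q i - 1) * d i ^ 2 := by
  set β : ℝ := (b : ℝ) + c - p
  set S := ∑ j ∈ univ.filter (fun j : Fin p => (j : ℕ) < c), |d j|
  have hS : 0 < S := sum_pos (fun i _ => abs_pos.mpr (hd i)) ⟨⟨0, by omega⟩, by simp [hc0]⟩
  have hfeas : ∀ i, 0 < π i ∧ π i ≤ 1 := by
    intro i
    rw [hπ i]
    split_ifs with hi
    · refine ⟨by have := abs_pos.mpr (hd i); positivity, (div_le_one hS).mpr ?_⟩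
      exact mul_abs_le_sum_of_le_sum_div (hd _) hsorted hclo.le hchi (Fin.mk_le_mk.mpr (by omega))
    · exact ⟨one_pos, le_rfl⟩
  have hsum : ∑ i, π i = b := by
    simp only [hπ, sum_ite_val_lt_one hcp, ← sum_div, ← mul_sum]
    rw [mul_div_assoc, div_self hS.ne', mul_one]
    ring
  refine ⟨⟨hfeas, hsum⟩, fun q hq hqsum => ?_⟩
  refine sum_one_div_sub_one_mul_le_of_kkt (fun i => (hfeas i).1) hq (hsum.trans hqsum.symm)
    (sq_nonneg (S / β)) fun i => ?_
  by_cases hi : (i : ℕ) < c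
  · left
    rw [hπ i, if_pos hi, ← sq_abs (d i)]
    field_simp
  · have hβ1 : (b : ℝ) + ((c + 1 : ℕ) : ℝ) - p = β + 1 := by push_cast; ring
    have hnext := hmax (c + 1) (by omega) (by omega)
    rw [hβ1] at hnext
    -- `hnext` mentions `d ⟨c + 1 - 1, _⟩`, which is `d ⟨c, _⟩` definitionally
    exact Or.inr ⟨by rw [hπ i, if_neg hi],
      sq_sum_div_le_sq_of_not_le hd hsorted hclo (by omega) hnext (by omega)⟩
end

section
/- Let F : ℝⁿ → ℝ have L-Lipschitz gradient, and let Y = {c, v¹, …, vⁿ} ⊂ B(c; δ) be poised for linear interpolation with V = [v¹-c, …, vⁿ-c] invertible. Let g be the linear interpolation gradient satisfying (vʲ-c)ᵀ g = F(vʲ) - F(c) for j = 1,…,n. Then ‖∇F(c) - g‖ ≤ (L√n/2)‖V⁻¹‖ δ². -/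
/-!
Each interpolation condition together with the descent lemma confines `⟪vʲ - c, ∇F(c) - g⟫`
to `[-Lδ²/2, Lδ²/2]`. These numbers are the entries of `Vᵀ (∇F(c) - g)`, whose Euclidean norm is
therefore at most `√n · Lδ²/2`; undoing `Vᵀ` costs a factor `‖V⁻ᵀ‖ = ‖V⁻¹‖`.
-/

open scoped RealInnerProductSpace Matrix

theorem norm_image_sub_sub_fderiv_apply_le {E F : Type*} [NormedAddCommGroup E] [NormedSpace ℝ E]
    [NormedAddCommGroup F] [NormedSpace ℝ F] {f : E → F} {f' : E → E →L[ℝ] F} {L : ℝ} {a : E}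
    (hf : ∀ x, HasFDerivAt f (f' x) x) (hf' : ∀ x, ‖f' x - f' a‖ ≤ L * ‖x - a‖) (b : E) :
    ‖f b - f a - f' a (b - a)‖ ≤ L / 2 * ‖b - a‖ ^ 2 := by
  set d := b - a
  set φ : ℝ → F := fun t => f (a + t • d) - f a - t • f' a d
  have hφ : ∀ t, HasDerivAt φ ((f' (a + t • d) - f' a) d) t := by
    intro t
    have hline : HasDerivAt (fun t : ℝ => a + t • d) d t := by
      simpa using ((hasDerivAt_id t).smul_const d).const_add a
    convert (((hf _).comp_hasDerivAt t hline).sub_const (f a)).sub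
      ((hasDerivAt_id t).smul_const (f' a d)) using 1
    · rfl
    · simp
  have hB : ∀ t, HasDerivAt (fun t => L / 2 * ‖d‖ ^ 2 * t ^ 2) (L * ‖d‖ ^ 2 * t) t := fun t =>
    ((hasDerivAt_pow 2 t).const_mul _).congr_deriv (by simp; ring)
  have hbound : ∀ t ∈ Set.Ico (0 : ℝ) 1, ‖(f' (a + t • d) - f' a) d‖ ≤ L * ‖d‖ ^ 2 * t := by
    rintro t ⟨ht, -⟩
    calc ‖(f' (a + t • d) - f' a) d‖ ≤ ‖f' (a + t • d) - f' a‖ * ‖d‖ :=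
          ContinuousLinearMap.le_opNorm _ _
      _ ≤ L * ‖t • d‖ * ‖d‖ := by
        gcongr
        simpa using hf' (a + t • d)
      _ = L * ‖d‖ ^ 2 * t := by
        rw [norm_smul, Real.norm_of_nonneg ht]
        ring
  -- Fencing `φ` by the parabola avoids integrating `f'`, which need not be continuous.
  have hfence := image_norm_le_of_norm_deriv_right_le_deriv_boundary
    (fun t _ => (hφ t).continuousAt.continuousWithinAt) (fun t _ => (hφ t).hasDerivWithinAt)
    (by simp [φ]) hB hbound (Set.right_mem_Icc.2 zero_le_one)
  simpa [φ, d] using hfence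

theorem abs_image_sub_sub_inner_gradient_le {E : Type*} [NormedAddCommGroup E]
    [InnerProductSpace ℝ E] [CompleteSpace E] {F : E → ℝ} {L : ℝ} {a : E}
    (hF : Differentiable ℝ F) (hlip : ∀ x, ‖gradient F x - gradient F a‖ ≤ L * ‖x - a‖) (b : E) :
    |F b - F a - ⟪gradient F a, b - a⟫| ≤ L / 2 * ‖b - a‖ ^ 2 := by
  have := norm_image_sub_sub_fderiv_apply_le (f' := fun x => InnerProductSpace.toDual ℝ E
    (gradient F x)) (fun x => (hF x).hasGradientAt.hasFDerivAt) (fun x => by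
      rw [← map_sub, LinearIsometryEquiv.norm_map]; exact hlip x) b
  simpa [InnerProductSpace.toDual_apply_apply] using this

theorem EuclideanSpace.norm_le_sqrt_card_mul {𝕜 ι : Type*} [RCLike 𝕜] [Fintype ι]
    {x : EuclideanSpace 𝕜 ι} {M : ℝ} (hx : ∀ i, ‖x i‖ ≤ M) :
    ‖x‖ ≤ √(Fintype.card ι) * M := by
  rcases isEmpty_or_nonempty ι with hι | ⟨⟨i₀⟩⟩
  · simp [EuclideanSpace.norm_eq]
  have hM : 0 ≤ M := (norm_nonneg _).trans (hx i₀)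
  calc ‖x‖ = √(∑ i, ‖x i‖ ^ 2) := EuclideanSpace.norm_eq x
    _ ≤ √(∑ _i : ι, M ^ 2) := by gcongr with i; exact hx i
    _ = √(Fintype.card ι) * M := by
      rw [Finset.sum_const, Finset.card_univ, nsmul_eq_mul, Real.sqrt_mul (Nat.cast_nonneg _),
        Real.sqrt_sq hM]

namespace Matrix

variable {𝕜 ι : Type*} [RCLike 𝕜] [Fintype ι] [DecidableEq ι]

theorem norm_le_norm_toEuclideanCLM_inv_mul {A : Matrix ι ι 𝕜} (hA : IsUnit A.det)
    (x : EuclideanSpace 𝕜 ι) :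
    ‖x‖ ≤ ‖toEuclideanCLM (𝕜 := 𝕜) A⁻¹‖ * ‖toEuclideanCLM (𝕜 := 𝕜) Aᴴ x‖ := by
  have hinv : toEuclideanCLM (𝕜 := 𝕜) (A⁻¹)ᴴ (toEuclideanCLM (𝕜 := 𝕜) Aᴴ x) = x := by
    rw [← mul_apply_eq_comp, ← map_mul, ← conjTranspose_mul,
      mul_nonsing_inv _ hA, conjTranspose_one, map_one, one_apply_eq_self]
  calc ‖x‖ ≤ ‖toEuclideanCLM (𝕜 := 𝕜) (A⁻¹)ᴴ‖ * ‖toEuclideanCLM (𝕜 := 𝕜) Aᴴ x‖ := by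
        conv_lhs => rw [← hinv]
        exact ContinuousLinearMap.le_opNorm _ _
    _ = ‖toEuclideanCLM (𝕜 := 𝕜) A⁻¹‖ * ‖toEuclideanCLM (𝕜 := 𝕜) Aᴴ x‖ := by
        rw [← star_eq_conjTranspose, map_star, ContinuousLinearMap.star_eq_adjoint,
          LinearIsometryEquiv.norm_map]

theorem toEuclideanCLM_conjTranspose_apply_eq_inner {A : Matrix ι ι 𝕜}
    {u : ι → EuclideanSpace 𝕜 ι} (hA : ∀ i j, A i j = u j i) (x : EuclideanSpace 𝕜 ι) (j : ι) :
    toEuclideanCLM (𝕜 := 𝕜) Aᴴ x j = inner 𝕜 (u j) x := by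
  simp [mulVec, dotProduct, PiLp.inner_apply, hA, mul_comm]

end Matrix

theorem stmt9_general {n : ℕ} (F : EuclideanSpace ℝ (Fin n) → ℝ) (L : ℝ) (hL : 0 ≤ L)
    (hdiff : Differentiable ℝ F)
    (hlip : ∀ a b : EuclideanSpace ℝ (Fin n), ‖gradient F a - gradient F b‖ ≤ L * ‖a - b‖)
    (c : EuclideanSpace ℝ (Fin n)) (δ : ℝ)
    (v : Fin n → EuclideanSpace ℝ (Fin n)) (hv : ∀ j, ‖v j - c‖ ≤ δ)
    (V : Matrix (Fin n) (Fin n) ℝ) (hV : ∀ i j, V i j = (v j - c) i)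
    (hVinv : IsUnit V.det)
    (g : EuclideanSpace ℝ (Fin n))
    (hg : ∀ j, ⟪v j - c, g⟫ = F (v j) - F c) :
    ‖gradient F c - g‖
      ≤ L * Real.sqrt n / 2 * ‖Matrix.toEuclideanCLM (𝕜 := ℝ) V⁻¹‖ * δ ^ 2 := by
  have hinner : ∀ j, |⟪v j - c, gradient F c - g⟫| ≤ L / 2 * δ ^ 2 := fun j => by
    have hdescent := abs_image_sub_sub_inner_gradient_le hdiff (fun x => hlip x c) (v j)
    have herror : ⟪v j - c, gradient F c - g⟫
        = -(F (v j) - F c - ⟪gradient F c, v j - c⟫) := by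
      rw [inner_sub_right, hg j, real_inner_comm]; ring
    rw [herror, abs_neg]
    exact hdescent.trans (by gcongr; exact hv j)
  calc ‖gradient F c - g‖
      ≤ ‖Matrix.toEuclideanCLM (𝕜 := ℝ) V⁻¹‖
          * ‖Matrix.toEuclideanCLM (𝕜 := ℝ) Vᴴ (gradient F c - g)‖ :=
        Matrix.norm_le_norm_toEuclideanCLM_inv_mul hVinv _
    _ ≤ ‖Matrix.toEuclideanCLM (𝕜 := ℝ) V⁻¹‖ * (Real.sqrt n * (L / 2 * δ ^ 2)) := by
        gcongr
        refine (EuclideanSpace.norm_le_sqrt_card_mul fun j => ?_).trans_eq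
          (by rw [Fintype.card_fin])
        rw [Matrix.toEuclideanCLM_conjTranspose_apply_eq_inner hV, Real.norm_eq_abs]
        exact hinner j
    _ = L * Real.sqrt n / 2 * ‖Matrix.toEuclideanCLM (𝕜 := ℝ) V⁻¹‖ * δ ^ 2 := by ring

theorem stmt9 {n : ℕ} (F : EuclideanSpace ℝ (Fin n) → ℝ) (L : ℝ) (hL : 0 ≤ L)
    (hdiff : Differentiable ℝ F)
    (hlip : ∀ a b : EuclideanSpace ℝ (Fin n), ‖gradient F a - gradient F b‖ ≤ L * ‖a - b‖)
    (c : EuclideanSpace ℝ (Fin n)) (δ : ℝ) (hδ : 0 < δ)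
    (v : Fin n → EuclideanSpace ℝ (Fin n)) (hv : ∀ j, ‖v j - c‖ ≤ δ)
    (V : Matrix (Fin n) (Fin n) ℝ) (hV : ∀ i j, V i j = (v j - c) i)
    (hVinv : IsUnit V.det)
    (g : EuclideanSpace ℝ (Fin n))
    (hg : ∀ j, ⟪v j - c, g⟫ = F (v j) - F c) :
    ‖gradient F c - g‖
      ≤ L * Real.sqrt n / 2 * ‖Matrix.toEuclideanCLM (𝕜 := ℝ) V⁻¹‖ * δ ^ 2 :=
  stmt9_general F L hL hdiff hlip c δ v hv V hV hVinv g hg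
end
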